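/- For a Hermitian contraction H and a unit vector of the form (φ, 0) in ℂ^{2N}, applying L^n yields (T_n(H)φ, (I-H²)^{1/2}U_{n-1}(H)φ); in particular, the projection of L^n(φ,0) onto the first block is T_n(H)φ. -/

import Mathlib

/-!
Writing `S` for the square root of `1 - H²`, the only facts needed are `S² = 1 - H²` and that
`S` commutes with `H` (it is a continuous function of `1 - H²`). With these, the blocks of `Lⁿ`
satisfy the Chebyshev recurrences `T_{n+1} = X T_n - (1 - X²) U_{n-1}` and
`U_n = X U_{n-1} + T_n`, so by induction `Lⁿ = [[T_n(H), -S U_{n-1}(H)], [S U_{n-1}(H), T_n(H)]]`.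
-/

open Matrix
open scoped Matrix.Norms.L2Operator ComplexOrder

/-- The square root of a positive semidefinite matrix, as defined in Mathlib (December 2024). -/
noncomputable def Matrix.PosSemidef.sqrt {n : Type*} [Fintype n] [DecidableEq n] {𝕜 : Type*}
    [RCLike 𝕜] {A : Matrix n n 𝕜} (hA : A.PosSemidef) : Matrix n n 𝕜 :=
  hA.1.eigenvectorUnitary.1 * diagonal ((↑) ∘ (√·) ∘ hA.1.eigenvalues) *
  (star hA.1.eigenvectorUnitary : Matrix n n 𝕜)

open Polynomial Polynomial.Chebyshev

namespace Matrix.PosSemidef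

variable {n 𝕜 : Type*} [Fintype n] [DecidableEq n] [RCLike 𝕜] {A : Matrix n n 𝕜}

theorem sqrt_eq_cfc_real_sqrt (hA : A.PosSemidef) : hA.sqrt = cfc Real.sqrt A := by
  rw [hA.1.cfc_eq, Matrix.IsHermitian.cfc, Unitary.conjStarAlgAut_apply]
  rfl

open scoped MatrixOrder in
theorem sqrt_mul_self (hA : A.PosSemidef) : hA.sqrt * hA.sqrt = A := by
  rw [hA.sqrt_eq_cfc_real_sqrt, ← cfcₙ_eq_cfc, ← CFC.sqrt_eq_real_sqrt A hA.nonneg]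
  exact CFC.sqrt_mul_sqrt_self A hA.nonneg

theorem commute_sqrt_of_commute (hA : A.PosSemidef) {B : Matrix n n 𝕜} (h : Commute A B) :
    Commute hA.sqrt B := by
  rw [hA.sqrt_eq_cfc_real_sqrt]
  exact h.cfc_real _

end Matrix.PosSemidef

namespace Polynomial.Chebyshev

variable {R A : Type*} [CommRing R] [Ring A] [Algebra R A]

theorem aeval_T_add_one_eq_mul_T_sub_pol_U (x : A) (n : ℤ) :
    aeval x (T R (n + 1)) = x * aeval x (T R n) - (1 - x ^ 2) * aeval x (U R (n - 1)) := by
  have h := T_eq_X_mul_T_sub_pol_U R (n - 1)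
  rw [sub_add_cancel, show n - 1 + 2 = n + 1 by ring] at h
  simp [h]

theorem aeval_U_eq_mul_U_add_T (x : A) (n : ℤ) :
    aeval x (U R n) = x * aeval x (U R (n - 1)) + aeval x (T R n) := by
  have h := U_eq_X_mul_U_add_T R (n - 1)
  rw [sub_add_cancel] at h
  simp [h]

end Polynomial.Chebyshev

namespace Matrix

variable {R m : Type*} [CommRing R] [Fintype m] [DecidableEq m]

theorem fromBlocks_pow_eq_chebyshev {H S : Matrix m m R} (hS : S * S = 1 - H ^ 2)
    (hHS : Commute H S) (n : ℕ) :
    fromBlocks H (-S) S H ^ n =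
      fromBlocks (aeval H (T R n)) (-(S * aeval H (U R (n - 1))))
        (S * aeval H (U R (n - 1))) (aeval H (T R n)) := by
  induction n with
  | zero => simp [fromBlocks_one]
  | succ n ih =>
    rw [pow_succ', ih, fromBlocks_multiply, Nat.cast_succ, add_sub_cancel_right,
      aeval_T_add_one_eq_mul_T_sub_pol_U, aeval_U_eq_mul_U_add_T H (n : ℤ)]
    set t := aeval H (T R n)
    set u := aeval H (U R (n - 1))
    have hT : H * t + -S * (S * u) = H * t - (1 - H ^ 2) * u := by
      rw [neg_mul, ← mul_assoc, hS, ← sub_eq_add_neg]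
    have hU : S * t + H * (S * u) = S * (H * u + t) := by
      rw [← mul_assoc, hHS.eq, mul_assoc, ← mul_add, add_comm]
    refine fromBlocks_inj.mpr ⟨hT, ?_, hU, ?_⟩
    · rw [mul_neg, neg_mul, ← neg_add, add_comm, hU]
    · rw [mul_neg, ← mul_assoc, hS, add_comm, ← sub_eq_add_neg]

end Matrix

theorem L_pow_on_first_block_general {N : ℕ}
    (H : Matrix (Fin N) (Fin N) ℂ)
    (hpsd : (1 - H ^ 2).PosSemidef) (φ : Fin N → ℂ) (n : ℕ) :
    (Matrix.fromBlocks H (-hpsd.sqrt) hpsd.sqrt H ^ n).mulVec (Sum.elim φ 0) =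
      Sum.elim
        ((Polynomial.aeval H (Polynomial.Chebyshev.T ℂ (n : ℤ))).mulVec φ)
        ((hpsd.sqrt *
            Polynomial.aeval H (Polynomial.Chebyshev.U ℂ ((n : ℤ) - 1))).mulVec φ) := by
  have hHS : Commute H hpsd.sqrt :=
    (hpsd.commute_sqrt_of_commute
      ((Commute.one_left H).sub_left ((Commute.refl H).pow_left 2))).symm
  rw [fromBlocks_pow_eq_chebyshev hpsd.sqrt_mul_self hHS, fromBlocks_mulVec]
  simp

theorem L_pow_on_first_block {N : ℕ}
    (H : Matrix (Fin N) (Fin N) ℂ) (hH : H.IsHermitian) (hnorm : ‖H‖ ≤ 1)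
    (hpsd : (1 - H ^ 2).PosSemidef) (φ : Fin N → ℂ) (n : ℕ) :
    (Matrix.fromBlocks H (-hpsd.sqrt) hpsd.sqrt H ^ n).mulVec (Sum.elim φ 0) =
      Sum.elim
        ((Polynomial.aeval H (Polynomial.Chebyshev.T ℂ (n : ℤ))).mulVec φ)
        ((hpsd.sqrt *
            Polynomial.aeval H (Polynomial.Chebyshev.U ℂ ((n : ℤ) - 1))).mulVec φ) :=
  L_pow_on_first_block_general H hpsd φ n
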